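/- arXiv:2011.13962 — 3 statements merged into one kernel-verified Lean document; each statement's English description precedes it below -/
import Mathlib

section
/- If K has pushouts and M is a class of morphisms closed under composition and under pushout, then the class of M-effective squares is closed under vertical composition. -/
open CategoryTheory CategoryTheory.Limits

/-!
Write `P₁ = B ⊔_A A'`, `P = B ⊔_A A''` and `Q = B' ⊔_{A'} A''`. Pasting pushouts twice shows that
the comparison map `P₁ ⟶ B'` of the upper square is pushed out along `P₁ ⟶ P` to the map
`P ⟶ Q`, which therefore lies in `M`; the comparison map `P ⟶ B''` of the composite square is
`P ⟶ Q` followed by the comparison map `Q ⟶ B''` of the lower square.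
-/

namespace CategoryTheory.Limits.pushout

variable {K : Type*} [Category K] [HasPushouts K] {A B A' B' A'' B'' : K}

-- the global simp tags of these lemmas do not fire for pushouts provided by `HasPushouts`
attribute [local simp] inl_desc inr_desc inl_desc_assoc inr_desc_assoc

theorem isPushout_inr_map_comp (f : A ⟶ B) (u : A ⟶ A') (u' : A' ⟶ A'') :
    IsPushout (inr f u) u' (map f u f (u ≫ u') (𝟙 B) u' (𝟙 A) (by simp) (by simp))
      (inr f (u ≫ u')) :=
  IsPushout.of_top (by simpa [map] using IsPushout.of_hasPushout f (u ≫ u')) (by simp [map])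
    (IsPushout.of_hasPushout f u)

theorem isPushout_desc_map (f : A ⟶ B) (f' : A' ⟶ B') (u : A ⟶ A') (v : B ⟶ B') (u' : A' ⟶ A'')
    (w : f ≫ v = u ≫ f') :
    IsPushout (desc v f' w) (map f u f (u ≫ u') (𝟙 B) u' (𝟙 A) (by simp) (by simp)) (inl f' u')
      (map f (u ≫ u') f' u' v (𝟙 A'') u w (by simp)) :=
  IsPushout.of_left (by simpa [map] using IsPushout.of_hasPushout f' u')
    (by ext <;> simp [map, condition]) (isPushout_inr_map_comp f u u')

theorem desc_comp_eq_map_comp_desc (f : A ⟶ B) (f' : A' ⟶ B') (f'' : A'' ⟶ B'') (u : A ⟶ A')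
    (v : B ⟶ B') (u' : A' ⟶ A'') (v' : B' ⟶ B'') (w₁ : f ≫ v = u ≫ f') (w₂ : f' ≫ v' = u' ≫ f'')
    (w : f ≫ v ≫ v' = (u ≫ u') ≫ f'') :
    desc (v ≫ v') f'' w = map f (u ≫ u') f' u' v (𝟙 A'') u w₁ (by simp) ≫ desc v' f'' w₂ := by
  ext <;> simp [map]

end CategoryTheory.Limits.pushout

/-- If `K` has pushouts and `M` contains identities, is closed under composition and
under pushout, then `M`-effective squares (viewed as morphisms in the arrow category,
with composition being vertical composition of squares) are closed under composition.
A square `(u, v) : f ⟶ f'` is `M`-effective when the comparison morphism from the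
pushout of `(f, u)` to the codomain of `f'` lies in `M`. -/
theorem M_effective_closed_under_vertical_composition {K : Type*} [Category K] [HasPushouts K]
    (M : MorphismProperty K)
    (hcomp : ∀ {X Y Z : K} (a : X ⟶ Y) (b : Y ⟶ Z), M a → M b → M (a ≫ b))
    (hpo : ∀ {X Y Z W : K} {a : X ⟶ Y} {b : X ⟶ Z} {c : Y ⟶ W} {d : Z ⟶ W},
      IsPushout a b c d → M a → M d)
    {A B A' B' A'' B'' : K}
    (f : A ⟶ B) (f' : A' ⟶ B') (f'' : A'' ⟶ B'')
    (u : A ⟶ A') (v : B ⟶ B') (u' : A' ⟶ A'') (v' : B' ⟶ B'')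
    (w₁ : f ≫ v = u ≫ f') (w₂ : f' ≫ v' = u' ≫ f'')
    (e₁ : M (pushout.desc v f' w₁))
    (e₂ : M (pushout.desc v' f'' w₂)) :
    M (pushout.desc (v ≫ v') f''
      (show f ≫ v ≫ v' = (u ≫ u') ≫ f'' by
        rw [← Category.assoc, w₁, Category.assoc, w₂, ← Category.assoc])) := by
  rw [pushout.desc_comp_eq_map_comp_desc f f' f'' u v u' v' w₁ w₂]
  exact hcomp _ _ (hpo (pushout.isPushout_desc_map f f' u v u' w₁) e₁) e₂
end

section
/- The pushout, in the arrow category, of an M-effective square along an arbitrary commutative square is again M-effective. -/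
open CategoryTheory CategoryTheory.Limits

/-!
Write `P = C ⊔_A B` and `P' = C' ⊔_{A'} B'` for the pushouts of the two spans. Since
`B' = B ⊔_A A'`, pasting gives `P' = C' ⊔_A B = P ⊔_C C'`, and then
`D ⊔_P P' = D ⊔_P (P ⊔_C C') = D ⊔_C C' = D'`. So the comparison map `P' ⟶ D'` of the new
square is the pushout of the comparison map `P ⟶ D` of the old one, and `M` is stable under
pushouts.
-/

namespace CategoryTheory.IsPushout

variable {K : Type*} [Category K]

theorem of_span_map_of_isPushout_leg {A B C A' B' C' P P' : K}
    {m₁ : A ⟶ C} {m₀ : A ⟶ B} {i : C ⟶ P} {j : B ⟶ P} (hP : IsPushout m₁ m₀ i j)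
    {m₁' : A' ⟶ C'} {m₀' : A' ⟶ B'} {i' : C' ⟶ P'} {j' : B' ⟶ P'}
    (hP' : IsPushout m₁' m₀' i' j')
    {a : A ⟶ A'} {b : B ⟶ B'} {c : C ⟶ C'} (hB' : IsPushout m₀ a b m₀')
    (wac : m₁ ≫ c = a ≫ m₁') {f : P ⟶ P'} (hfi : i ≫ f = c ≫ i') (hfj : j ≫ f = b ≫ j') :
    IsPushout i c f i' := by
  have hpasted : IsPushout m₀ (m₁ ≫ c) (j ≫ f) i' := by
    rw [wac, hfj]
    exact hB'.paste_vert hP'.flip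
  exact hpasted.of_top hfi hP.flip

end CategoryTheory.IsPushout

theorem isPushout_pushout_desc_of_isPushout_components {K : Type*} [Category K]
    [HasPushouts K] {A B C D A' B' C' D' : K}
    {m₁ : A ⟶ C} {m₃ : B ⟶ D} {m₁' : A' ⟶ C'} {m₃' : B' ⟶ D'}
    {m₀ : A ⟶ B} {m₂ : C ⟶ D} {m₀' : A' ⟶ B'} {m₂' : C' ⟶ D'}
    {a : A ⟶ A'} {b : B ⟶ B'} {c : C ⟶ C'} {d : D ⟶ D'}
    (w : m₁ ≫ m₂ = m₀ ≫ m₃) (wac : m₁ ≫ c = a ≫ m₁')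
    (hB' : IsPushout m₀ a b m₀') (hD' : IsPushout m₂ c d m₂')
    (w' : m₁' ≫ m₂' = m₀' ≫ m₃') (wbd : m₃ ≫ d = b ≫ m₃') :
    IsPushout (pushout.desc m₂ m₃ w) (pushout.map m₁ m₀ m₁' m₀' c b a wac hB'.w) d
      (pushout.desc m₂' m₃' w') := by
  have hP : IsPushout (pushout.inl m₁ m₀) c (pushout.map m₁ m₀ m₁' m₀' c b a wac hB'.w)
      (pushout.inl m₁' m₀') :=
    IsPushout.of_span_map_of_isPushout_leg (.of_hasPushout m₁ m₀) (.of_hasPushout m₁' m₀')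
      hB' wac (pushout.inl_desc _ _ _) (pushout.inr_desc _ _ _)
  refine .of_left ?_ ?_ hP
  · simpa only [pushout.inl_desc] using hD'
  · ext
    · rw [pushout.inl_desc_assoc, pushout.inl_desc_assoc, Category.assoc, pushout.inl_desc,
        hD'.w]
    · rw [pushout.inr_desc_assoc, pushout.inr_desc_assoc, Category.assoc, pushout.inr_desc,
        wbd]

/-- The pushout, in the arrow category, of an `M`-effective square along an arbitrary
commutative square is again `M`-effective.  The pushout in `K²` is computed
componentwise: `B'` is the pushout of `(m₀, a)` and `D'` is the pushout of `(m₂, c)`. -/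
theorem M_effective_stable_under_pushout_in_arrow_category {K : Type*} [Category K]
    [HasPushouts K] (M : MorphismProperty K)
    (hpo : ∀ {X Y Z W : K} {a : X ⟶ Y} {b : X ⟶ Z} {c : Y ⟶ W} {d : Z ⟶ W},
      IsPushout a b c d → M a → M d)
    {A B C D A' B' C' D' : K}
    (m₁ : A ⟶ C) (m₃ : B ⟶ D) (m₁' : A' ⟶ C') (m₃' : B' ⟶ D')
    (m₀ : A ⟶ B) (m₂ : C ⟶ D) (m₀' : A' ⟶ B') (m₂' : C' ⟶ D')
    (a : A ⟶ A') (b : B ⟶ B') (c : C ⟶ C') (d : D ⟶ D')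
    -- the original square, as a morphism `(m₀, m₂) : m₁ ⟶ m₃` of `K²`
    (w : m₁ ≫ m₂ = m₀ ≫ m₃)
    -- the square `(a, c) : m₁ ⟶ m₁'`
    (wac : m₁ ≫ c = a ≫ m₁')
    -- the componentwise pushouts
    (hB' : IsPushout m₀ a b m₀') (hD' : IsPushout m₂ c d m₂')
    -- the induced square `(m₀', m₂') : m₁' ⟶ m₃'` and `(b, d) : m₃ ⟶ m₃'`
    (w' : m₁' ≫ m₂' = m₀' ≫ m₃') (wbd : m₃ ≫ d = b ≫ m₃')
    -- the original square is `M`-effective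
    (he : M (pushout.desc m₂ m₃ w)) :
    M (pushout.desc m₂' m₃' w') :=
  hpo (isPushout_pushout_desc_of_isPushout_components w wac hB' hD' w' wbd) he
end

section
/- The pasting of an M-effective square with a pushout square on top is M-effective, provided M is closed under composition and pushout-stable. -/
/-!
The comparison map of the pasted square, `pushout f (g ≫ g') ⟶ D'`, is the cobase change of the
comparison map `pushout f g ⟶ D` of `S₁` along the canonical map
`pushout f g ⟶ pushout f (g ≫ g')`. Two applications of pushout cancellation show this: first the
square of that canonical map over `g'` is a pushout, and then, since `S₂` is a pushout, so is the
square relating the two comparison maps.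
-/

open CategoryTheory CategoryTheory.Limits

namespace CategoryTheory.Limits

variable {K : Type*} [Category K] {A B C D C' D' : K}

lemma isPushout_inr_map_comp_right (f : A ⟶ B) (g : A ⟶ C) (g' : C ⟶ C')
    [HasPushout f g] [HasPushout f (g ≫ g')] :
    IsPushout (pushout.inr f g) g'
      (pushout.map f g f (g ≫ g') (𝟙 B) g' (𝟙 A) (by simp) (by simp))
      (pushout.inr f (g ≫ g')) :=
  IsPushout.of_top (by simpa [pushout.inl_desc] using IsPushout.of_hasPushout f (g ≫ g'))
    (pushout.inr_desc _ _ _) (IsPushout.of_hasPushout f g)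

lemma isPushout_desc_map_comp_right {f : A ⟶ B} {g : A ⟶ C} {h : B ⟶ D} {k : C ⟶ D}
    {g' : C ⟶ C'} {k' : C' ⟶ D'} {d' : D ⟶ D'} [HasPushout f g] [HasPushout f (g ≫ g')]
    (w₁ : f ≫ h = g ≫ k) (w₂ : f ≫ h ≫ d' = (g ≫ g') ≫ k') (hpush : IsPushout k g' d' k') :
    IsPushout (pushout.desc h k w₁)
      (pushout.map f g f (g ≫ g') (𝟙 B) g' (𝟙 A) (by simp) (by simp)) d'
      (pushout.desc (h ≫ d') k' w₂) :=
  IsPushout.of_left (by simpa only [pushout.inr_desc] using hpush)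
    (by
      ext <;> simp only [pushout.inl_desc_assoc, pushout.inr_desc_assoc, pushout.inl_desc,
        pushout.inr_desc, Category.id_comp, Category.assoc, hpush.w])
    (isPushout_inr_map_comp_right f g g')

end CategoryTheory.Limits

/-- The pasting of an `M`-effective square with a pushout square on top is
`M`-effective, provided `M` contains identities, is closed under composition and is
stable under pushouts.  Here `S₁` is an `M`-effective square on span `(f, g)` with
cocone `(h, k)` and vertex `D`, `S₂` is a pushout square on span `(g' : C ⟶ C',
k : C ⟶ D)` with vertex `D'`, and the pasted square is on span `(f, g ≫ g')` with
cocone `(h ≫ d', k')` and vertex `D'`. -/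
theorem paste_effective_with_pushout {K : Type*} [Category K] [HasPushouts K]
    (M : MorphismProperty K)
    (hpo : ∀ {X Y Z W : K} {a : X ⟶ Y} {b : X ⟶ Z} {c : Y ⟶ W} {d : Z ⟶ W},
      IsPushout a b c d → M a → M d)
    {A B C D C' D' : K}
    (f : A ⟶ B) (g : A ⟶ C) (h : B ⟶ D) (k : C ⟶ D)
    (g' : C ⟶ C') (k' : C' ⟶ D') (d' : D ⟶ D')
    (w₁ : f ≫ h = g ≫ k)
    (heff : M (pushout.desc h k w₁))
    (hS₂ : IsPushout k g' d' k') :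
    M (pushout.desc (h ≫ d') k'
      (show f ≫ h ≫ d' = (g ≫ g') ≫ k' by
        rw [← Category.assoc, w₁, Category.assoc, hS₂.w, ← Category.assoc])) :=
  hpo (isPushout_desc_map_comp_right w₁ _ hS₂) heff
end
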